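/- arXiv:1908.09385 — 2 statements merged into one kernel-verified Lean document; each statement's English description precedes it below -/
import Mathlib

section
/- Let b = sqrt(3/8) and define on ℝ \ {0}: φ(x) = (x²+b²)³/(2b·x⁴), ū(x) = x/(x²+b²), and ω̄(x) = −2bx/(x²+b²)² with derivative ω̄'(x). Then the following explicit identities hold for all x ≠ 0: d/dx[x·φ(x)]/φ(x) = (3x²−3b²)/(x²+b²), d/dx[ū(x)·φ(x)]/φ(x) = (x²−3b²)/(x²+b²)², and ω̄'(x)²·φ(x)·x⁴ = 2b(3x²−b²)²/(x²+b²)³; consequently there exists a constant C > 0 such that for all x ≠ 0, |d/dx[x·φ(x)]/(2φ(x))| ≤ C, |d/dx[ū(x)·φ(x)]/(2φ(x))| ≤ C, and ω̄'(x)²·φ(x)·x⁴ ≤ C. -/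
open Real

noncomputable def b0 : ℝ := Real.sqrt (3/8)

noncomputable def phi (x : ℝ) : ℝ := (x^2 + b0^2)^3 / (2 * b0 * x^4)

noncomputable def ubar (x : ℝ) : ℝ := x / (x^2 + b0^2)

noncomputable def wbar (x : ℝ) : ℝ := -2 * b0 * x / (x^2 + b0^2)^2

lemma b0_pos : 0 < b0 := Real.sqrt_pos.2 (by norm_num)

lemma b0_sq : b0^2 = 3/8 := Real.sq_sqrt (by norm_num)

lemma den_pos (x : ℝ) : 0 < x^2 + b0^2 := by
  have := b0_pos; positivity

lemma hasDerivAt_phi {x : ℝ} (hx : x ≠ 0) :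
    HasDerivAt phi ((3*(x^2+b0^2)^2*(2*x) * (2*b0*x^4) - (x^2+b0^2)^3 * (2*b0*(4*x^3))) / (2*b0*x^4)^2) x := by
  have hN : HasDerivAt (fun y : ℝ => (y^2+b0^2)^3) (3*(x^2+b0^2)^2*(2*x)) x := by
    have h1 : HasDerivAt (fun y : ℝ => y^2 + b0^2) (2*x) x := by
      simpa using (hasDerivAt_pow 2 x).add_const (b0^2)
    simpa [mul_comm, mul_assoc] using h1.fun_pow 3
  have hD : HasDerivAt (fun y : ℝ => 2*b0*y^4) (2*b0*(4*x^3)) x := by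
    simpa [mul_comm, mul_assoc] using (hasDerivAt_pow 4 x).const_mul (2*b0)
  have hD0 : 2*b0*x^4 ≠ 0 := by
    have := b0_pos; positivity
  exact hN.div hD hD0

lemma hasDerivAt_wbar (x : ℝ) :
    HasDerivAt wbar ((-2*b0 * ((x^2+b0^2)^2) - (-2*b0*x) * (2*(x^2+b0^2)*(2*x))) / ((x^2+b0^2)^2)^2) x := by
  have hN : HasDerivAt (fun y : ℝ => -2*b0*y) (-2*b0) x := by
    simpa using (hasDerivAt_id x).const_mul (-2*b0)
  have hD : HasDerivAt (fun y : ℝ => (y^2+b0^2)^2) (2*(x^2+b0^2)*(2*x)) x := by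
    have h1 : HasDerivAt (fun y : ℝ => y^2 + b0^2) (2*x) x := by
      simpa using (hasDerivAt_pow 2 x).add_const (b0^2)
    simpa [mul_comm, mul_assoc] using h1.fun_pow 2
  have hD0 : (x^2+b0^2)^2 ≠ 0 := by
    have := den_pos x; positivity
  exact hN.div hD hD0

/-- Explicit identities for the logarithmic derivatives of the weight `φ`
against `x` and `ū`, and for `ω̄'(x)²·φ(x)·x⁴`, together with uniform bounds. -/
theorem weight_identities_and_bounds :
    (∀ x : ℝ, x ≠ 0 →
      deriv (fun y => y * phi y) x / phi x
          = (3 * x^2 - 3 * b0^2) / (x^2 + b0^2) ∧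
      deriv (fun y => ubar y * phi y) x / phi x
          = (x^2 - 3 * b0^2) / (x^2 + b0^2)^2 ∧
      (deriv wbar x)^2 * phi x * x^4
          = 2 * b0 * (3 * x^2 - b0^2)^2 / (x^2 + b0^2)^3) ∧
    ∃ C : ℝ, 0 < C ∧ ∀ x : ℝ, x ≠ 0 →
      |deriv (fun y => y * phi y) x / (2 * phi x)| ≤ C ∧
      |deriv (fun y => ubar y * phi y) x / (2 * phi x)| ≤ C ∧
      (deriv wbar x)^2 * phi x * x^4 ≤ C := by
  have hb := b0_pos
  have hbsq := b0_sq
  have key : ∀ x : ℝ, x ≠ 0 →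
      deriv (fun y => y * phi y) x / phi x
          = (3 * x^2 - 3 * b0^2) / (x^2 + b0^2) ∧
      deriv (fun y => ubar y * phi y) x / phi x
          = (x^2 - 3 * b0^2) / (x^2 + b0^2)^2 ∧
      (deriv wbar x)^2 * phi x * x^4
          = 2 * b0 * (3 * x^2 - b0^2)^2 / (x^2 + b0^2)^3 := by
    intro x hx
    have hden := den_pos x
    have hden' : x^2 + b0^2 ≠ 0 := ne_of_gt hden
    have hb' : b0 ≠ 0 := ne_of_gt hb
    have hphi := hasDerivAt_phi hx
    have hphi_pos : 0 < phi x := by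
      unfold phi; positivity
    have hphi0 : phi x ≠ 0 := ne_of_gt hphi_pos
    have hU : HasDerivAt ubar (((1:ℝ) * (x^2+b0^2) - x * (2*x)) / (x^2+b0^2)^2) x := by
      have h1 : HasDerivAt (fun y : ℝ => y^2 + b0^2) (2*x) x := by
        simpa using (hasDerivAt_pow 2 x).add_const (b0^2)
      exact (hasDerivAt_id x).div h1 hden'
    have h1 : deriv (fun y => y * phi y) x
        = 1 * phi x + x * ((3*(x^2+b0^2)^2*(2*x) * (2*b0*x^4) - (x^2+b0^2)^3 * (2*b0*(4*x^3))) / (2*b0*x^4)^2) :=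
      ((hasDerivAt_id x).mul hphi).deriv
    have h2 : deriv (fun y => ubar y * phi y) x
        = (((1:ℝ) * (x^2+b0^2) - x * (2*x)) / (x^2+b0^2)^2) * phi x
          + ubar x * ((3*(x^2+b0^2)^2*(2*x) * (2*b0*x^4) - (x^2+b0^2)^3 * (2*b0*(4*x^3))) / (2*b0*x^4)^2) :=
      (hU.mul hphi).deriv
    have h3 : deriv wbar x
        = (-2*b0 * ((x^2+b0^2)^2) - (-2*b0*x) * (2*(x^2+b0^2)*(2*x))) / ((x^2+b0^2)^2)^2 :=
      (hasDerivAt_wbar x).deriv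
    refine ⟨?_, ?_, ?_⟩
    · rw [h1]; unfold phi; field_simp; ring
    · rw [h2]; unfold phi ubar; field_simp; ring
    · rw [h3]; unfold phi; field_simp; ring
  refine ⟨key, 100, by norm_num, ?_⟩
  intro x hx
  obtain ⟨k1, k2, k3⟩ := key x hx
  have hden := den_pos x
  have hphi_pos : 0 < phi x := by
    unfold phi; positivity
  have hbsq' : b0^2 = 3/8 := b0_sq
  have e1 : deriv (fun y => y * phi y) x / (2 * phi x)
      = (3 * x^2 - 3 * b0^2) / (x^2 + b0^2) / 2 := by
    rw [show (2 * phi x) = phi x * 2 by ring, ← div_div, k1]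
  have e2 : deriv (fun y => ubar y * phi y) x / (2 * phi x)
      = (x^2 - 3 * b0^2) / (x^2 + b0^2)^2 / 2 := by
    rw [show (2 * phi x) = phi x * 2 by ring, ← div_div, k2]
  refine ⟨?_, ?_, ?_⟩
  · rw [e1, abs_le]
    constructor
    · rw [le_div_iff₀ (by norm_num : (0:ℝ) < 2), le_div_iff₀ hden]
      nlinarith [sq_nonneg x]
    · rw [div_le_iff₀ (by norm_num : (0:ℝ) < 2), div_le_iff₀ hden]
      nlinarith [sq_nonneg x]
  · rw [e2, abs_le]
    have hden2 : (0:ℝ) < (x^2 + b0^2)^2 := by positivity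
    constructor
    · rw [le_div_iff₀ (by norm_num : (0:ℝ) < 2), le_div_iff₀ hden2]
      nlinarith [sq_nonneg x, sq_nonneg (x^2)]
    · rw [div_le_iff₀ (by norm_num : (0:ℝ) < 2), div_le_iff₀ hden2]
      nlinarith [sq_nonneg x, sq_nonneg (x^2)]
  · rw [k3, div_le_iff₀ (by positivity : (0:ℝ) < (x^2 + b0^2)^3)]
    have hb1 : b0 ≤ 1 := by nlinarith
    nlinarith [sq_nonneg x, sq_nonneg (x^2), sq_nonneg (x^2 - b0^2), sq_nonneg (x^2 + b0^2), mul_pos hden (mul_pos hden hden)]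
end

section
/- There exists an absolute constant C > 0 such that for every p ≥ 1, every γ ∈ (0,2), and every measurable function ω: ℝ → ℝ, the following inequality of integrals in [0, ∞] holds: ∬_{ℝ×ℝ} ( sgn(ω(x))·|ω(x)|^{p−1} − sgn(ω(y))·|ω(y)|^{p−1} )·( ω(x) − ω(y) ) / |x−y|^{1+γ} dx dy ≥ C·min(p−1, 1/p) · ∬_{ℝ×ℝ} ( |ω(x)|^{p/2} − |ω(y)|^{p/2} )² / |x−y|^{1+γ} dx dy. -/
open MeasureTheory Real

/-- The odd power function `t ↦ sgn(t)·|t|^{p−1}` (equal to `t·|t|^{p−2}` for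
`t ≠ 0` and to `0` at `t = 0`). -/
noncomputable def oddPow (p t : ℝ) : ℝ := Real.sign t * |t| ^ (p - 1)

lemma oddPow_neg (p t : ℝ) : oddPow p (-t) = -oddPow p t := by
  unfold oddPow
  rw [Real.sign_neg, abs_neg]; ring

lemma oddPow_of_pos (p : ℝ) {t : ℝ} (ht : 0 < t) : oddPow p t = t ^ (p - 1) := by
  unfold oddPow
  rw [Real.sign_of_pos ht, abs_of_pos ht, one_mul]

lemma oddPow_nonneg (p : ℝ) {t : ℝ} (ht : 0 ≤ t) : 0 ≤ oddPow p t := by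
  rcases ht.eq_or_lt with h | h
  · simp [oddPow, ← h]
  · rw [oddPow_of_pos p h]; positivity

lemma sq_rpow_half {p t : ℝ} (hp : 1 ≤ p) (ht : 0 ≤ t) : (t ^ (p / 2)) ^ 2 = t ^ p := by
  rcases ht.eq_or_lt with h | h
  · rw [← h, Real.zero_rpow (show p / 2 ≠ 0 by positivity),
      Real.zero_rpow (show p ≠ 0 by positivity)]
    norm_num
  · rw [sq, ← Real.rpow_add h]; ring_nf

lemma oddPow_mul_self {p t : ℝ} (hp : 1 ≤ p) (ht : 0 ≤ t) : oddPow p t * t = t ^ p := by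
  rcases ht.eq_or_lt with h | h
  · rw [← h, Real.zero_rpow (show p ≠ 0 by positivity)]
    simp [oddPow]
  · rw [oddPow_of_pos p h, ← Real.rpow_add_one h.ne', sub_add_cancel]

lemma lemA {α β u v : ℝ} (hβ0 : 0 ≤ β) (hβ1 : β ≤ 1) (hαβ : α + β = 2)
    (hv : 0 ≤ v) (hvu : v ≤ u) :
    β * (u - v) ^ 2 ≤ (u ^ α - v ^ α) * (u ^ β - v ^ β) := by
  have hα1 : 1 ≤ α := by linarith
  have hu0 : 0 ≤ u := hv.trans hvu
  rcases hu0.eq_or_lt with h | hu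
  · have hv0 : v = 0 := le_antisymm (h ▸ hvu) hv
    rw [← h, hv0]
    simp
  · have hvα : v ^ α ≤ u ^ (α - 1) * v := by
      rcases hv.eq_or_lt with h0 | h0
      · rw [← h0, Real.zero_rpow (show α ≠ 0 by positivity), mul_zero]
      · calc v ^ α = v ^ (α - 1) * v := by
              rw [← Real.rpow_add_one h0.ne', sub_add_cancel]
          _ ≤ u ^ (α - 1) * v :=
              mul_le_mul_of_nonneg_right (Real.rpow_le_rpow hv hvu (by linarith)) hv
    have huα : u ^ α = u ^ (α - 1) * u := by
      rw [← Real.rpow_add_one hu.ne', sub_add_cancel]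
    have h1 : u ^ (α - 1) * (u - v) ≤ u ^ α - v ^ α := by nlinarith [hvα, huα]
    have hgm : v ^ β * u ^ (1 - β) ≤ β * v + (1 - β) * u :=
      Real.geom_mean_le_arith_mean2_weighted hβ0 (by linarith) hv hu.le (by ring)
    have hub : (0:ℝ) ≤ u ^ (β - 1) := Real.rpow_nonneg hu.le _
    have e1 : v ^ β = v ^ β * u ^ (1 - β) * u ^ (β - 1) := by
      rw [mul_assoc, ← Real.rpow_add hu]
      norm_num
    have e2 : u ^ β = u ^ (β - 1) * u := by
      rw [← Real.rpow_add_one hu.ne', sub_add_cancel]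
    have h2 : β * u ^ (β - 1) * (u - v) ≤ u ^ β - v ^ β := by
      nlinarith [mul_le_mul_of_nonneg_right hgm hub]
    have hA : 0 ≤ u ^ (α - 1) * (u - v) :=
      mul_nonneg (Real.rpow_nonneg hu.le _) (by linarith)
    have hB : 0 ≤ β * u ^ (β - 1) * (u - v) :=
      mul_nonneg (mul_nonneg hβ0 hub) (by linarith)
    have hprod := mul_le_mul h1 h2 hB (le_trans hA h1)
    have e3 : u ^ (α - 1) * u ^ (β - 1) = 1 := by
      rw [← Real.rpow_add hu, show α - 1 + (β - 1) = 0 by linarith, Real.rpow_zero]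
    have e4 : (u ^ (α - 1) * (u - v)) * (β * u ^ (β - 1) * (u - v)) = β * (u - v) ^ 2 := by
      linear_combination (β * (u - v) ^ 2) * e3
    calc β * (u - v) ^ 2 = _ := e4.symm
      _ ≤ _ := hprod

lemma key_nonneg {p : ℝ} (hp : 1 ≤ p) {a b : ℝ} (hb : 0 ≤ b) (hba : b ≤ a) :
    min (p - 1) (1 / p) * (a ^ (p / 2) - b ^ (p / 2)) ^ 2
      ≤ (a ^ (p - 1) - b ^ (p - 1)) * (a - b) := by
  have hp0 : (0:ℝ) < p := by linarith
  have ha : 0 ≤ a := hb.trans hba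
  have hvu : b ^ (p / 2) ≤ a ^ (p / 2) := Real.rpow_le_rpow hb hba (by positivity)
  have hv : (0:ℝ) ≤ b ^ (p / 2) := Real.rpow_nonneg hb _
  have idA : ∀ t : ℝ, 0 ≤ t → (t ^ (p / 2)) ^ (2 / p) = t := by
    intro t ht
    rw [← Real.rpow_mul ht, show p / 2 * (2 / p) = 1 by field_simp, Real.rpow_one]
  have idB : ∀ t : ℝ, 0 ≤ t → (t ^ (p / 2)) ^ (2 * (p - 1) / p) = t ^ (p - 1) := by
    intro t ht
    rw [← Real.rpow_mul ht]
    congr 1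
    field_simp
  rcases le_total p 2 with h2 | h2
  · have hA := lemA (α := 2 / p) (β := 2 * (p - 1) / p)
      (div_nonneg (by linarith) hp0.le) (by rw [div_le_one hp0]; linarith)
      (by field_simp; ring) hv hvu
    rw [idA a ha, idA b hb, idB a ha, idB b hb] at hA
    have hmin : min (p - 1) (1 / p) ≤ 2 * (p - 1) / p := by
      refine le_trans (min_le_left _ _) ?_
      rw [le_div_iff₀ hp0]; nlinarith
    calc min (p - 1) (1 / p) * (a ^ (p / 2) - b ^ (p / 2)) ^ 2
        ≤ 2 * (p - 1) / p * (a ^ (p / 2) - b ^ (p / 2)) ^ 2 :=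
          mul_le_mul_of_nonneg_right hmin (sq_nonneg _)
      _ ≤ (a - b) * (a ^ (p - 1) - b ^ (p - 1)) := hA
      _ = (a ^ (p - 1) - b ^ (p - 1)) * (a - b) := mul_comm _ _
  · have hA := lemA (α := 2 * (p - 1) / p) (β := 2 / p)
      (by positivity) (by rw [div_le_one hp0]; linarith)
      (by field_simp; ring) hv hvu
    rw [idA a ha, idA b hb, idB a ha, idB b hb] at hA
    have hmin : min (p - 1) (1 / p) ≤ 2 / p := by
      refine le_trans (min_le_right _ _) ?_
      gcongr
      norm_num
    calc min (p - 1) (1 / p) * (a ^ (p / 2) - b ^ (p / 2)) ^ 2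
        ≤ 2 / p * (a ^ (p / 2) - b ^ (p / 2)) ^ 2 :=
          mul_le_mul_of_nonneg_right hmin (sq_nonneg _)
      _ ≤ (a ^ (p - 1) - b ^ (p - 1)) * (a - b) := hA

lemma main_nonneg {p : ℝ} (hp : 1 ≤ p) {a b : ℝ} (hb : 0 ≤ b) (hba : b ≤ a) :
    min (p - 1) (1 / p) * (|a| ^ (p / 2) - |b| ^ (p / 2)) ^ 2
      ≤ (oddPow p a - oddPow p b) * (a - b) := by
  have ha : 0 ≤ a := hb.trans hba
  rw [abs_of_nonneg ha, abs_of_nonneg hb]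
  rcases ha.eq_or_lt with h | h
  · have hb0 : b = 0 := le_antisymm (h ▸ hba) hb
    rw [← h, hb0]
    simp
  · have hob : oddPow p b ≤ b ^ (p - 1) := by
      rcases hb.eq_or_lt with h0 | h0
      · rw [← h0]
        simpa [oddPow] using Real.rpow_nonneg le_rfl (p - 1)
      · rw [oddPow_of_pos p h0]
    have h1 : a ^ (p - 1) - b ^ (p - 1) ≤ oddPow p a - oddPow p b := by
      rw [oddPow_of_pos p h]
      linarith
    calc min (p - 1) (1 / p) * (a ^ (p / 2) - b ^ (p / 2)) ^ 2
        ≤ (a ^ (p - 1) - b ^ (p - 1)) * (a - b) := key_nonneg hp hb hba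
      _ ≤ (oddPow p a - oddPow p b) * (a - b) :=
          mul_le_mul_of_nonneg_right h1 (by linarith)

lemma main_mixed {p : ℝ} (hp : 1 ≤ p) {a b : ℝ} (ha : 0 ≤ a) (hb : b ≤ 0) :
    min (p - 1) (1 / p) * (|a| ^ (p / 2) - |b| ^ (p / 2)) ^ 2
      ≤ (oddPow p a - oddPow p b) * (a - b) := by
  have hp0 : (0:ℝ) < p := by linarith
  have hc0 : 0 ≤ -b := by linarith
  rw [abs_of_nonneg ha, abs_of_nonpos hb]
  have hmin1 : min (p - 1) (1 / p) ≤ 1 :=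
    le_trans (min_le_right _ _) (by rw [div_le_one hp0]; linarith)
  have hmin0 : 0 ≤ min (p - 1) (1 / p) := le_min (by linarith) (by positivity)
  have hsq : (a ^ (p / 2) - (-b) ^ (p / 2)) ^ 2 ≤ a ^ p + (-b) ^ p := by
    have h1 := sq_rpow_half hp ha
    have h2 := sq_rpow_half hp hc0
    nlinarith [mul_nonneg (Real.rpow_nonneg ha (p / 2)) (Real.rpow_nonneg hc0 (p / 2))]
  have hR : a ^ p + (-b) ^ p ≤ (oddPow p a - oddPow p b) * (a - b) := by
    have hbneg : oddPow p b = - oddPow p (-b) := by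
      rw [oddPow_neg]; ring
    rw [hbneg]
    have e1 := oddPow_mul_self hp ha
    have e2 := oddPow_mul_self hp hc0
    have c1 : 0 ≤ oddPow p a * (-b) := mul_nonneg (oddPow_nonneg p ha) hc0
    have c2 : 0 ≤ oddPow p (-b) * a := mul_nonneg (oddPow_nonneg p hc0) ha
    nlinarith [e1, e2, c1, c2]
  calc min (p - 1) (1 / p) * (a ^ (p / 2) - (-b) ^ (p / 2)) ^ 2
      ≤ 1 * (a ^ p + (-b) ^ p) := mul_le_mul hmin1 hsq (sq_nonneg _) one_pos.le
    _ = a ^ p + (-b) ^ p := one_mul _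
    _ ≤ _ := hR

lemma key_pointwise {p : ℝ} (hp : 1 ≤ p) (a b : ℝ) :
    min (p - 1) (1 / p) * (|a| ^ (p / 2) - |b| ^ (p / 2)) ^ 2
      ≤ (oddPow p a - oddPow p b) * (a - b) := by
  rcases le_total 0 a with ha | ha <;> rcases le_total 0 b with hb | hb
  · rcases le_total b a with h | h
    · exact main_nonneg hp hb h
    · calc min (p - 1) (1 / p) * (|a| ^ (p / 2) - |b| ^ (p / 2)) ^ 2
          = min (p - 1) (1 / p) * (|b| ^ (p / 2) - |a| ^ (p / 2)) ^ 2 := by ring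
        _ ≤ (oddPow p b - oddPow p a) * (b - a) := main_nonneg hp ha h
        _ = (oddPow p a - oddPow p b) * (a - b) := by ring
  · exact main_mixed hp ha hb
  · calc min (p - 1) (1 / p) * (|a| ^ (p / 2) - |b| ^ (p / 2)) ^ 2
        = min (p - 1) (1 / p) * (|b| ^ (p / 2) - |a| ^ (p / 2)) ^ 2 := by ring
      _ ≤ (oddPow p b - oddPow p a) * (b - a) := main_mixed hp hb ha
      _ = (oddPow p a - oddPow p b) * (a - b) := by ring
  · rcases le_total b a with h | h
    · have h' := main_nonneg hp (neg_nonneg.mpr ha) (neg_le_neg h)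
      rw [abs_neg, abs_neg, oddPow_neg, oddPow_neg] at h'
      calc min (p - 1) (1 / p) * (|a| ^ (p / 2) - |b| ^ (p / 2)) ^ 2
          = min (p - 1) (1 / p) * (|b| ^ (p / 2) - |a| ^ (p / 2)) ^ 2 := by ring
        _ ≤ (-oddPow p b - -oddPow p a) * (-b - -a) := h'
        _ = (oddPow p a - oddPow p b) * (a - b) := by ring
    · have h' := main_nonneg hp (neg_nonneg.mpr hb) (neg_le_neg h)
      rw [abs_neg, abs_neg, oddPow_neg, oddPow_neg] at h'
      calc min (p - 1) (1 / p) * (|a| ^ (p / 2) - |b| ^ (p / 2)) ^ 2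
          ≤ (-oddPow p a - -oddPow p b) * (-a - -b) := h'
        _ = (oddPow p a - oddPow p b) * (a - b) := by ring

/-- Positivity of the fractional Laplacian in `L^p` estimates, in symmetrized
double-integral form: there is an absolute `C > 0` such that for every
`p ≥ 1`, `γ ∈ (0,2)` and measurable `ω : ℝ → ℝ`,
`∬ (oddPow p ω(x) − oddPow p ω(y))(ω(x) − ω(y))/|x−y|^{1+γ}`
is at least `C·min(p−1,1/p)` times
`∬ (|ω(x)|^{p/2} − |ω(y)|^{p/2})²/|x−y|^{1+γ}` (as integrals in `[0,∞]`). -/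
theorem fractional_laplacian_positivity :
    ∃ C : ℝ, 0 < C ∧
      ∀ p : ℝ, 1 ≤ p → ∀ γ : ℝ, 0 < γ → γ < 2 →
        ∀ ω : ℝ → ℝ, Measurable ω →
          ENNReal.ofReal (C * min (p - 1) (1 / p)) *
            ∫⁻ z : ℝ × ℝ, ENNReal.ofReal
              ((|ω z.1| ^ (p / 2) - |ω z.2| ^ (p / 2))^2 / |z.1 - z.2| ^ (1 + γ))
          ≤ ∫⁻ z : ℝ × ℝ, ENNReal.ofReal
              ((oddPow p (ω z.1) - oddPow p (ω z.2)) * (ω z.1 - ω z.2)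
                / |z.1 - z.2| ^ (1 + γ)) := by
  refine ⟨1, one_pos, fun p hp γ hγ0 hγ2 ω hω => ?_⟩
  have hp0 : (0:ℝ) < p := by linarith
  have hm0 : 0 ≤ 1 * min (p - 1) (1 / p) := by
    rw [one_mul]; exact le_min (by linarith) (by positivity)
  rw [← lintegral_const_mul' _ _ ENNReal.ofReal_ne_top]
  refine lintegral_mono fun z => ?_
  rw [← ENNReal.ofReal_mul hm0]
  apply ENNReal.ofReal_le_ofReal
  have hdn : 0 ≤ |z.1 - z.2| ^ (1 + γ) := Real.rpow_nonneg (abs_nonneg _) _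
  have hk := key_pointwise hp (ω z.1) (ω z.2)
  rcases hdn.eq_or_lt with h | h
  · rw [← h, div_zero, div_zero, mul_zero]
  · rw [one_mul, mul_div_assoc']
    exact div_le_div_of_nonneg_right hk h.le
end
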